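/- Let d > m ≥ 1 be integers, c ∈ ℂ with |c| = 1, and M > 0. Let α < β with β − α < 2π and let S = {r·e^{iθ} : r > 0, α < θ < β}. Assume that for every t ≥ 0, every θ ∈ [α, β] and every r > 0 one has t·(r e^{iθ})^d + c·(r e^{iθ})^m ≠ 0 (the closure of S contains no turning point of t z^d + c z^m for any t ≥ 0). Let q : ℂ → ℂ satisfy |q(z)| ≤ M·|z|^{m−1} for all |z| ≥ 1, and for t ≥ 0 set Q_t(z) = t·z^d + c·z^m + q(z). Then for every ε > 0 there exists R ≥ 1 such that for every t ≥ 0 and every z ∈ S with |z| ≥ R: (i) Q_t(z) ≠ 0; and (ii) there exist s > 0 and ψ ∈ (−ε, ε) with Q_t(z) = s·e^{iψ}·(t z^d + c z^m); consequently the vertical direction of Q_t(z)dz² at z differs from that of (t z^d + c z^m)dz² by an angle less than ε/2. -/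

import Mathlib

/-!
Writing `z = r e^{iθ}` and `k = d - m`, the binomial factors as
`t z^d + c z^m = z^m (u e^{ikθ} + c)` with `u = t r^k ≥ 0`. The hypothesis says that the rays
`u ↦ u e^{ikθ} + c`, `θ ∈ [α, β]`, miss the origin; by compactness of `[0, ‖c‖ + 1] × [α, β]`
they stay a distance `δ > 0` from it, so `|t z^d + c z^m| ≥ δ |z|^m`. The perturbation
`q(z) = O(|z|^{m-1})` is therefore relatively small for `|z|` large, and
`Q_t(z) = (t z^d + c z^m) · w` with `w` close to `1`; continuity of `arg` at `1` then makes the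
rotation angle `arg w` small.
-/

open Complex Set

theorem exists_pos_le_norm_smul_add {E : Type*} [NormedAddCommGroup E] [NormedSpace ℝ E]
    {K : Set E} (hK : IsCompact K) (hK₁ : ∀ v ∈ K, ‖v‖ = 1) (c : E)
    (h : ∀ u : ℝ, 0 ≤ u → ∀ v ∈ K, u • v + c ≠ 0) :
    ∃ δ > 0, ∀ u : ℝ, 0 ≤ u → ∀ v ∈ K, δ ≤ ‖u • v + c‖ := by
  obtain ⟨δ, hδ, hmin⟩ := (isCompact_Icc (a := 0) (b := ‖c‖ + 1)).prod hK
    |>.exists_forall_le' (f := fun p : ℝ × E => ‖p.1 • p.2 + c‖) (by fun_prop)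
      (fun p hp => norm_pos_iff.2 (h _ hp.1.1 _ hp.2))
  refine ⟨min δ 1, by positivity, fun u hu v hv => ?_⟩
  rcases le_or_gt u (‖c‖ + 1) with hu_le | hu_gt
  · exact (min_le_left _ _).trans (hmin (u, v) ⟨⟨hu, hu_le⟩, hv⟩)
  · have hnorm : ‖u • v‖ = u := by rw [norm_smul, hK₁ v hv, mul_one, Real.norm_of_nonneg hu]
    calc min δ 1 ≤ ‖u • v‖ - ‖-c‖ := by rw [hnorm, norm_neg]; linarith [min_le_right δ 1]
      _ ≤ ‖u • v + c‖ := by simpa using norm_sub_norm_le (u • v) (-c)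

theorem binomial_eq_pow_mul {d m : ℕ} (hmd : m ≤ d) (t c z : ℂ) :
    t * z ^ d + c * z ^ m = z ^ m * (t * z ^ (d - m) + c) := by
  obtain ⟨k, rfl⟩ := Nat.exists_eq_add_of_le hmd
  rw [Nat.add_sub_cancel_left, pow_add]
  ring

theorem exists_pos_mul_pow_le_norm_binomial {d m : ℕ} (hmd : m ≤ d) {c : ℂ} {α β : ℝ}
    (h : ∀ t : ℝ, 0 ≤ t → ∀ θ ∈ Icc α β,
      (t : ℂ) * exp (θ * I) ^ d + c * exp (θ * I) ^ m ≠ 0) :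
    ∃ δ > 0, ∀ t : ℝ, 0 ≤ t → ∀ θ ∈ Icc α β, ∀ r : ℝ, 0 ≤ r →
      δ * r ^ m ≤ ‖(t : ℂ) * (r * exp (θ * I)) ^ d + c * (r * exp (θ * I)) ^ m‖ := by
  have hK : IsCompact ((fun θ : ℝ => exp (θ * I) ^ (d - m)) '' Icc α β) :=
    isCompact_Icc.image (by fun_prop)
  obtain ⟨δ, hδ, hle⟩ := exists_pos_le_norm_smul_add hK
    (by rintro _ ⟨θ, -, rfl⟩; rw [norm_pow, norm_exp_ofReal_mul_I, one_pow]) c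
    (by
      rintro u hu _ ⟨θ, hθ, rfl⟩ h0
      simp only [real_smul] at h0
      exact h u hu θ hθ (by rw [binomial_eq_pow_mul hmd, h0, mul_zero]))
  refine ⟨δ, hδ, fun t ht θ hθ r hr => ?_⟩
  have hu := hle (t * r ^ (d - m)) (by positivity) _ ⟨θ, hθ, rfl⟩
  rw [binomial_eq_pow_mul hmd, norm_mul, norm_pow, norm_mul, norm_exp_ofReal_mul_I, mul_one,
    norm_real, Real.norm_of_nonneg hr, mul_comm δ]
  refine mul_le_mul_of_nonneg_left (hu.trans_eq ?_) (pow_nonneg hr m)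
  rw [real_smul, mul_pow]
  push_cast
  ring_nf

theorem exists_pos_add_eq_mul_exp_mul {ε : ℝ} (hε : 0 < ε) :
    ∃ η > 0, ∀ B q : ℂ, B ≠ 0 → ‖q‖ ≤ η * ‖B‖ →
      B + q ≠ 0 ∧ ∃ s ψ : ℝ, 0 < s ∧ |ψ| < ε ∧ B + q = s * exp (ψ * I) * B := by
  obtain ⟨η, hη, harg⟩ :=
    Metric.continuousAt_iff.1 (continuousAt_arg one_mem_slitPlane) ε hε
  refine ⟨min (η / 2) (1 / 2), by positivity, fun B q hB hq => ?_⟩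
  set w := 1 + q / B
  have hw₁ : ‖w - 1‖ < min η 1 := by
    rw [add_sub_cancel_left, norm_div, div_lt_iff₀ (norm_pos_iff.2 hB)]
    refine hq.trans_lt (mul_lt_mul_of_pos_right ?_ (norm_pos_iff.2 hB))
    exact min_lt_min (half_lt_self hη) (by norm_num)
  have hw : w ≠ 0 := by
    rintro hw
    rw [hw, zero_sub, norm_neg, norm_one] at hw₁
    exact (min_le_right η 1).not_gt hw₁
  have hBq : B + q = w * B := by simp only [w]; field_simp
  refine ⟨hBq ▸ mul_ne_zero hw hB, ‖w‖, arg w, norm_pos_iff.2 hw, ?_, ?_⟩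
  · simpa using harg (by rw [dist_eq_norm]; exact hw₁.trans_le (min_le_left _ _))
  · rw [hBq, norm_mul_exp_arg_mul_I]

theorem perturbed_binomial_directions
    (d m : ℕ) (hm : 1 ≤ m) (hdm : m < d)
    (c : ℂ) (M : ℝ)
    (α β : ℝ)
    (hnoturn : ∀ t : ℝ, 0 ≤ t → ∀ θ ∈ Set.Icc α β, ∀ r : ℝ, 0 < r →
      (t : ℂ) * ((r : ℂ) * Complex.exp ((θ : ℂ) * Complex.I)) ^ d +
        c * ((r : ℂ) * Complex.exp ((θ : ℂ) * Complex.I)) ^ m ≠ 0)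
    (q : ℂ → ℂ) (hq : ∀ z : ℂ, 1 ≤ ‖z‖ → ‖q z‖ ≤ M * ‖z‖ ^ (m - 1)) :
    ∀ ε > (0 : ℝ), ∃ R : ℝ, 1 ≤ R ∧ ∀ t : ℝ, 0 ≤ t → ∀ z : ℂ,
      (∃ r θ : ℝ, 0 < r ∧ α < θ ∧ θ < β ∧ z = (r : ℂ) * Complex.exp ((θ : ℂ) * Complex.I)) →
      R ≤ ‖z‖ →
      ((t : ℂ) * z ^ d + c * z ^ m + q z ≠ 0 ∧
       ∃ s ψ : ℝ, 0 < s ∧ |ψ| < ε ∧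
         (t : ℂ) * z ^ d + c * z ^ m + q z =
           (s : ℂ) * Complex.exp ((ψ : ℂ) * Complex.I) * ((t : ℂ) * z ^ d + c * z ^ m)) := by
  intro ε hε
  obtain ⟨η, hη, hrotate⟩ := exists_pos_add_eq_mul_exp_mul hε
  obtain ⟨δ, hδ, hbinomial⟩ := exists_pos_mul_pow_le_norm_binomial hdm.le
    fun t ht θ hθ => by simpa using hnoturn t ht θ hθ 1 one_pos
  refine ⟨max 1 (M / (δ * η)), le_max_left _ _, ?_⟩
  rintro t ht _ ⟨r, θ, hr, hαθ, hθβ, rfl⟩ hR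
  have hnorm : ‖(r : ℂ) * exp (θ * I)‖ = r := by
    rw [norm_mul, norm_exp_ofReal_mul_I, mul_one, norm_real, Real.norm_of_nonneg hr.le]
  rw [hnorm, max_le_iff, div_le_iff₀ (by positivity)] at hR
  have hlower := hbinomial t ht θ ⟨hαθ.le, hθβ.le⟩ r hr.le
  have hsmall : ‖q (r * exp (θ * I))‖ ≤
      η * ‖(t : ℂ) * (r * exp (θ * I)) ^ d + c * (r * exp (θ * I)) ^ m‖ := calc
    _ ≤ M * r ^ (m - 1) := (hq _ (hnorm.symm ▸ hR.1)).trans_eq (by rw [hnorm])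
    _ ≤ r * (δ * η) * r ^ (m - 1) := by gcongr; exact hR.2
    _ = η * (δ * r ^ m) := by
      rw [← Nat.sub_add_cancel hm, pow_succ, Nat.add_sub_cancel]; ring
    _ ≤ _ := by gcongr
  exact hrotate _ _ (norm_pos_iff.1 ((by positivity : 0 < δ * r ^ m).trans_le hlower)) hsmall
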